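/- Let 𝔊 = (G = (V,E), Parity(ℙ), ψ_pers(Λ)) be a parity game augmented with persistent live groups whose priority function satisfies ℙ : V → {0,…,h} with h even, and let N_h = {v ∈ V : ℙ(v) = h}. Let S ⊆ V be a nonempty dominion for Player 1 in 𝔊, and let Z be the set of vertices from which Player 1 has a strategy such that every compliant play satisfies ψ_pers(Λ), violates Parity(ℙ), and stays forever in S ∖ N_h. Then Z is nonempty, and Z is a dominion for Player 1 in 𝔊. -/
import Mathlib


universe u

/-- A two-player game graph: finite-intended vertex set `V`, an ownership function
(`owner v = 0` means `v` is a Player-0 vertex, `owner v = 1` a Player-1 vertex),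
and an edge relation such that every vertex has at least one outgoing edge. -/
structure GameGraph (V : Type u) where
  owner : V → Fin 2
  E : V → V → Prop
  exists_succ : ∀ v, ∃ w, E v w

variable {V : Type u}

/-- A play of the game graph: an infinite sequence of vertices following edges. -/
def IsPlay (G : GameGraph V) (ρ : ℕ → V) : Prop :=
  ∀ k, G.E (ρ k) (ρ (k + 1))

/-- A (history-dependent) strategy: given the list of previously visited
vertices and the current vertex, it chooses a next vertex. -/
abbrev Strategy (V : Type u) := List V → V → V

/-- A strategy of Player `i` is valid if at each Player-`i` vertex it chooses
an edge of the game graph. -/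
def StratValid (G : GameGraph V) (i : Fin 2) (σ : Strategy V) : Prop :=
  ∀ (h : List V) (v : V), G.owner v = i → G.E v (σ h v)

/-- A positional (memoryless) strategy ignores the history. -/
def Positional (σ : Strategy V) : Prop :=
  ∀ (h h' : List V) (v : V), σ h v = σ h' v

/-- A play is compliant with the strategy `σ` of Player `i` (a `σ`-play) if at
every Player-`i` vertex it moves to the vertex chosen by `σ`. -/
def Compliant (G : GameGraph V) (i : Fin 2) (σ : Strategy V) (ρ : ℕ → V) : Prop :=
  ∀ k, G.owner (ρ k) = i → ρ (k + 1) = σ (List.ofFn fun j : Fin k => ρ j.val) (ρ k)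

/-- `σ` is a winning strategy for Player `i` from `v`, where `W` is the set of
plays that are winning for Player `i`. -/
def WinsFrom (G : GameGraph V) (i : Fin 2) (W : Set (ℕ → V)) (σ : Strategy V) (v : V) : Prop :=
  StratValid G i σ ∧
    ∀ ρ : ℕ → V, IsPlay G ρ → Compliant G i σ ρ → ρ 0 = v → ρ ∈ W

/-- The winning region of Player `i`: the vertices from which Player `i` has a
winning strategy. -/
def WinRegion (G : GameGraph V) (i : Fin 2) (W : Set (ℕ → V)) : Set V :=
  {v | ∃ σ, WinsFrom G i W σ v}

/-- A vertex occurs infinitely often along a play. -/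
def InfOft (ρ : ℕ → V) (v : V) : Prop := ∀ n, ∃ k, n ≤ k ∧ ρ k = v

/-- An edge is taken infinitely often along a play. -/
def EdgeInfOft (ρ : ℕ → V) (e : V × V) : Prop :=
  ∀ n, ∃ k, n ≤ k ∧ ρ k = e.1 ∧ ρ (k + 1) = e.2

/-- Parity objective: the maximal priority occurring infinitely often is even. -/
def ParityWin (P : V → ℕ) (ρ : ℕ → V) : Prop :=
  ∃ v, InfOft ρ v ∧ Even (P v) ∧ ∀ w, InfOft ρ w → P w ≤ P v

/-- The set of source vertices of a set of edges. -/
def srcSet (H : Set (V × V)) : Set V := {u | ∃ w, (u, w) ∈ H}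

/-- A persistent live group: a triple `(S, C, R)` of a source region `S`, a set
`C` of (Player-0-sourced) edges, and a target region `R ⊆ S`. -/
abbrev PersGroup (V : Type u) := Set V × Set (V × V) × Set V

/-- Well-formedness of a persistent live group `(S, C, R)` over `G`:
`R ⊆ S ⊆ V` and `C ⊆ E` consists of edges with Player-0 sources. -/
def persWF (G : GameGraph V) (g : PersGroup V) : Prop :=
  g.2.2 ⊆ g.1 ∧ ∀ e ∈ g.2.1, G.E e.1 e.2 ∧ G.owner e.1 = 0

/-- A play satisfies `ψ_pers(S, C, R)` iff for every position `n`: if from `n`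
on the play stays in `S` and always takes an edge of `C` whenever it is at a
source of `C`, then the play visits `R` at some position `≥ n`. -/
def psiPersOne (S : Set V) (C : Set (V × V)) (R : Set V) (ρ : ℕ → V) : Prop :=
  ∀ n : ℕ,
    (∀ m2, n ≤ m2 → ρ m2 ∈ S ∧ (ρ m2 ∈ srcSet C → (ρ m2, ρ (m2 + 1)) ∈ C)) →
      ∃ m2, n ≤ m2 ∧ ρ m2 ∈ R

/-- The assumption `ψ_pers(Λ)` induced by a set `Λ` of persistent live groups. -/
def psiPers (Λ : Set (PersGroup V)) (ρ : ℕ → V) : Prop :=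
  ∀ g ∈ Λ, psiPersOne g.1 g.2.1 g.2.2 ρ

/-- `D` is a dominion for Player `i` in the augmented game over `G` with set of
winning plays `W`: Player `i` has a strategy such that every compliant play
starting in `D` stays in `D` forever and is winning for Player `i`. -/
def Dominion (G : GameGraph V) (i : Fin 2) (W : Set (ℕ → V)) (D : Set V) : Prop :=
  ∃ σ : Strategy V, StratValid G i σ ∧
    ∀ ρ : ℕ → V, IsPlay G ρ → Compliant G i σ ρ → ρ 0 ∈ D →
      (∀ n, ρ n ∈ D) ∧ ρ ∈ W

/-! ### Auxiliary machinery -/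

section Aux

variable {V : Type u}

/-- Follow a strategy, taking a default edge at opponent vertices. -/
noncomputable def follow (G : GameGraph V) (σ : Strategy V) (s : V) : ℕ → V
  | 0 => s
  | k + 1 =>
    if G.owner (follow G σ s k) = 1 then
      σ (List.ofFn fun j : Fin k => follow G σ s j) (follow G σ s k)
    else Classical.choose (G.exists_succ (follow G σ s k))
  decreasing_by
  all_goals first
    | exact Nat.lt_succ_self _
    | (rename_i j; exact Nat.lt_succ_of_lt j.isLt)

lemma follow_zero (G : GameGraph V) (σ : Strategy V) (s : V) : follow G σ s 0 = s := by
  rw [follow]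

lemma follow_succ (G : GameGraph V) (σ : Strategy V) (s : V) (k : ℕ) :
    follow G σ s (k + 1) =
      if G.owner (follow G σ s k) = 1 then
        σ (List.ofFn fun j : Fin k => follow G σ s j) (follow G σ s k)
      else Classical.choose (G.exists_succ (follow G σ s k)) := by
  rw [follow]

lemma follow_isPlay (G : GameGraph V) (σ : Strategy V) (hσ : StratValid G 1 σ) (s : V) :
    IsPlay G (follow G σ s) := by
  intro k
  rw [follow_succ]
  split
  · exact hσ _ _ (by assumption)
  · exact Classical.choose_spec (G.exists_succ _)

lemma follow_compliant (G : GameGraph V) (σ : Strategy V) (s : V) :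
    Compliant G 1 σ (follow G σ s) := by
  intro k hk
  rw [follow_succ, if_pos hk]

/-- Splice a play `ρ` (up to time `n`) with a continuation `τ`. -/
def splice (ρ τ : ℕ → V) (n : ℕ) : ℕ → V := fun k => if k < n then ρ k else τ (k - n)

/-- Shift a strategy by a fixed history prefix. -/
def shiftStrat (σ : Strategy V) (pre : List V) : Strategy V := fun hst v => σ (pre ++ hst) v

lemma shiftStrat_valid {G : GameGraph V} {i : Fin 2} {σ : Strategy V}
    (hσ : StratValid G i σ) (pre : List V) : StratValid G i (shiftStrat σ pre) :=
  fun hst v hv => hσ (pre ++ hst) v hv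

lemma splice_lt {ρ τ : ℕ → V} {n k : ℕ} (hk : k < n) : splice ρ τ n k = ρ k :=
  if_pos hk

lemma splice_ge {ρ τ : ℕ → V} {n k : ℕ} (hk : n ≤ k) : splice ρ τ n k = τ (k - n) :=
  if_neg (by omega)

lemma splice_add {ρ τ : ℕ → V} {n : ℕ} (k : ℕ) : splice ρ τ n (n + k) = τ k := by
  rw [splice_ge (by omega)]
  congr 1
  omega

lemma splice_agree {ρ τ : ℕ → V} {n : ℕ} (h0 : τ 0 = ρ n) {j : ℕ} (hj : j ≤ n) :
    splice ρ τ n j = ρ j := by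
  rcases lt_or_eq_of_le hj with hj | rfl
  · exact splice_lt hj
  · rw [splice_ge le_rfl, Nat.sub_self, h0]

lemma splice_hist {ρ τ : ℕ → V} {n : ℕ} (h0 : τ 0 = ρ n) (k : ℕ) :
    (List.ofFn fun j : Fin (n + k) => splice ρ τ n j.val) =
      (List.ofFn fun j : Fin n => ρ j.val) ++ (List.ofFn fun j : Fin k => τ j.val) := by
  apply List.ext_getElem
  · simp
  · intro i h1 h2
    simp only [List.length_ofFn] at h1 h2
    rcases lt_or_ge i n with hi | hi
    · rw [List.getElem_ofFn, List.getElem_append_left (by simpa using hi), List.getElem_ofFn]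
      exact splice_lt hi
    · rw [List.getElem_ofFn, List.getElem_append_right (by simpa using hi), List.getElem_ofFn]
      simp only [List.length_ofFn]
      exact splice_ge hi

lemma splice_isPlay {G : GameGraph V} {ρ τ : ℕ → V} {n : ℕ}
    (hρ : IsPlay G ρ) (hτ : IsPlay G τ) (h0 : τ 0 = ρ n) : IsPlay G (splice ρ τ n) := by
  intro k
  rcases lt_trichotomy (k + 1) n with hk | hk | hk
  · rw [splice_lt (by omega), splice_lt hk]
    exact hρ k
  · subst hk
    rw [splice_lt (Nat.lt_succ_self k), splice_ge le_rfl, Nat.sub_self, h0]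
    exact hρ k
  · rw [splice_ge (by omega), splice_ge (by omega)]
    have : k + 1 - n = (k - n) + 1 := by omega
    rw [this]
    exact hτ (k - n)

lemma splice_compliant {G : GameGraph V} {σ : Strategy V} {ρ τ : ℕ → V} {n : ℕ}
    (hρ : Compliant G 1 σ ρ)
    (hτ : Compliant G 1 (shiftStrat σ (List.ofFn fun j : Fin n => ρ j.val)) τ)
    (h0 : τ 0 = ρ n) : Compliant G 1 σ (splice ρ τ n) := by
  intro k hk
  rcases lt_or_ge k n with hkn | hkn
  · have hsk : splice ρ τ n k = ρ k := splice_lt hkn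
    have hhist : (List.ofFn fun j : Fin k => splice ρ τ n j.val) =
        (List.ofFn fun j : Fin k => ρ j.val) := by
      congr 1
      funext j
      exact splice_lt (lt_trans j.isLt hkn)
    rw [hhist, hsk, splice_agree h0 (by omega)]
    exact hρ k (by rwa [hsk] at hk)
  · obtain ⟨d, rfl⟩ : ∃ d, k = n + d := ⟨k - n, by omega⟩
    have hsk : splice ρ τ n (n + d) = τ d := splice_add d
    have h1 : splice ρ τ n (n + d + 1) = τ (d + 1) := by
      rw [show n + d + 1 = n + (d + 1) by omega, splice_add]
    rw [h1, hsk, splice_hist h0]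
    exact hτ d (by rwa [hsk] at hk)

lemma psiPersOne_tail {S : Set V} {C : Set (V × V)} {R : Set V} {ρ : ℕ → V} {n : ℕ}
    (hρ : psiPersOne S C R ρ) : psiPersOne S C R (fun k => ρ (n + k)) := by
  intro n0 hcond
  obtain ⟨m2, hm2, hR⟩ := hρ (n + n0) (fun m2 hm2 => by
    have := hcond (m2 - n) (by omega)
    simpa [show n + (m2 - n) = m2 by omega, show n + (m2 - n + 1) = m2 + 1 by omega] using this)
  exact ⟨m2 - n, by omega, by simpa [show n + (m2 - n) = m2 by omega] using hR⟩

lemma psiPers_tail {Λ : Set (PersGroup V)} {ρ : ℕ → V} {n : ℕ}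
    (hρ : psiPers Λ ρ) : psiPers Λ (fun k => ρ (n + k)) :=
  fun g hg => psiPersOne_tail (hρ g hg)

lemma parityWin_of_tail {P : V → ℕ} {ρ : ℕ → V} {n : ℕ}
    (hρ : ParityWin P (fun k => ρ (n + k))) : ParityWin P ρ := by
  obtain ⟨v, hv, hev, hmax⟩ := hρ
  refine ⟨v, ?_, hev, ?_⟩
  · intro m
    obtain ⟨k, hk, hkv⟩ := hv m
    exact ⟨n + k, by omega, hkv⟩
  · intro w hw
    refine hmax w ?_
    intro m
    obtain ⟨k, hk, hkw⟩ := hw (n + m)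
    exact ⟨k - n, by omega, by simpa [show n + (k - n) = k by omega] using hkw⟩

/-- If every compliant play from `s` violates parity, then there is a reachable
position after which no compliant continuation ever visits a priority-`h` vertex. -/
lemma exists_good_position {V : Type} [Fintype V] (G : GameGraph V)
    (h : ℕ) (hh : Even h) (P : V → ℕ) (hP : ∀ v, P v ≤ h)
    (σ : Strategy V) (s : V) (hσ : StratValid G 1 σ)
    (hWin : ∀ ρ : ℕ → V, IsPlay G ρ → Compliant G 1 σ ρ → ρ 0 = s → ¬ ParityWin P ρ) :
    ∃ (ρ : ℕ → V) (n : ℕ), IsPlay G ρ ∧ Compliant G 1 σ ρ ∧ ρ 0 = s ∧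
      ∀ ρ' : ℕ → V, IsPlay G ρ' → Compliant G 1 σ ρ' → (∀ j ≤ n, ρ' j = ρ j) →
        ∀ m, n ≤ m → P (ρ' m) ≠ h := by
  by_contra hbad
  push_neg at hbad
  set Inv : (ℕ → V) × ℕ → Prop := fun p => IsPlay G p.1 ∧ Compliant G 1 σ p.1 ∧ p.1 0 = s
    with hInvdef
  have hstep : ∀ p : {p : (ℕ → V) × ℕ // Inv p}, ∃ q : {p : (ℕ → V) × ℕ // Inv p},
      (∀ j ≤ p.1.2, q.1.1 j = p.1.1 j) ∧ p.1.2 < q.1.2 ∧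
      ∃ m, p.1.2 ≤ m ∧ m < q.1.2 ∧ P (q.1.1 m) = h := by
    rintro ⟨⟨ρ, n⟩, hp1, hp2, hp3⟩
    obtain ⟨ρ', h1, h2, h3, m, hm1, hm2⟩ := hbad ρ n hp1 hp2 hp3
    exact ⟨⟨⟨ρ', m + 1⟩, h1, h2, by show ρ' 0 = s; rw [h3 0 (Nat.zero_le n)]; exact hp3⟩,
      h3, by show n < m + 1; omega, m, hm1, by show m < m + 1; omega, hm2⟩
  let f : ℕ → {p : (ℕ → V) × ℕ // Inv p} :=
    fun i => Nat.rec ⟨⟨follow G σ s, 0⟩, follow_isPlay G σ hσ s, follow_compliant G σ s, follow_zero G σ s⟩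
      (fun _ prev => Classical.choose (hstep prev)) i
  let play : ℕ → ℕ → V := fun i => (f i).1.1
  let nn : ℕ → ℕ := fun i => (f i).1.2
  have hspec : ∀ i, (∀ j ≤ nn i, play (i + 1) j = play i j) ∧ nn i < nn (i + 1) ∧
      ∃ m, nn i ≤ m ∧ m < nn (i + 1) ∧ P (play (i + 1) m) = h :=
    fun i => Classical.choose_spec (hstep (f i))
  have hmono : ∀ i j, i ≤ j → nn i ≤ nn j := by
    intro i j hij
    induction j, hij using Nat.le_induction with
    | base => exact le_rfl
    | succ j hij ih => exact le_trans ih (le_of_lt (hspec j).2.1)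
  have hge : ∀ i, i ≤ nn i := by
    intro i
    induction i with
    | zero => exact Nat.zero_le _
    | succ i ih => have := (hspec i).2.1; omega
  have hagree : ∀ i j, i ≤ j → ∀ k ≤ nn i, play j k = play i k := by
    intro i j hij
    induction j, hij using Nat.le_induction with
    | base => intro k _; rfl
    | succ j hij ih => intro k hk
                       rw [(hspec j).1 k (le_trans hk (hmono i j hij)), ih k hk]
  have hC : ∀ i k, k ≤ nn i → play k k = play i k := by
    intro i k hk
    rcases le_total k i with hki | hki
    · exact (hagree k i hki k (hge k)).symm
    · exact hagree i k hki k hk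
  have hplayInf : IsPlay G (fun k => play k k) := by
    intro k
    have h1 := hC (k + 1) k (by have := hge (k + 1); omega)
    have h2 := hC (k + 1) (k + 1) (hge (k + 1))
    simp only []
    rw [h1, h2]
    exact (f (k + 1)).2.1 k
  have hcompInf : Compliant G 1 σ (fun k => play k k) := by
    intro k hk
    simp only [] at hk ⊢
    have h1 := hC (k + 1) k (by have := hge (k + 1); omega)
    have h2 := hC (k + 1) (k + 1) (hge (k + 1))
    have hist : (List.ofFn fun j : Fin k => play j.val j.val) =
        (List.ofFn fun j : Fin k => play (k + 1) j.val) := by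
      congr 1
      funext j
      exact hC (k + 1) j.val (by have := hge (k + 1); have := j.isLt; omega)
    rw [h2, hist, h1]
    exact (f (k + 1)).2.2.1 k (by rwa [h1] at hk)
  have h0Inf : play 0 0 = s := (f 0).2.2.2
  have hhits : ∀ N, ∃ m, N ≤ m ∧ P (play m m) = h := by
    intro N
    obtain ⟨m, hm1, hm2, hm3⟩ := (hspec N).2.2
    exact ⟨m, by have := hge N; omega, by rw [hC (N + 1) m (le_of_lt hm2)]; exact hm3⟩
  choose g hg1 hg2 using hhits
  obtain ⟨v, hv⟩ := Finite.exists_infinite_fiber (fun N => play (g N) (g N))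
  have hvinf : InfOft (fun k => play k k) v := by
    intro n
    obtain ⟨b, hb, hbn⟩ := (Set.infinite_coe_iff.mp hv).exists_gt n
    exact ⟨g b, le_trans (le_of_lt hbn) (hg1 b), hb⟩
  have hPv : P v = h := by
    obtain ⟨b0, hb0⟩ := (Set.infinite_coe_iff.mp hv).nonempty
    rw [← hb0]
    exact hg2 b0
  exact hWin (fun k => play k k) hplayInf hcompInf h0Inf
    ⟨v, hvinf, by rw [hPv]; exact hh, fun w _ => by rw [hPv]; exact hP w⟩

end Aux

/-- Let `𝔊 = (G, Parity(ℙ), ψ_pers(Λ))` with `ℙ : V → {0,…,h}`,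
`h` even, and `N_h = {v : ℙ(v) = h}`.  Let `S` be a nonempty dominion for
Player 1 in `𝔊`, and let `Z` be the set of vertices from which Player 1 has a
strategy such that every compliant play satisfies `ψ_pers(Λ)`, violates
`Parity(ℙ)`, and stays forever in `S ∖ N_h`.  Then `Z` is nonempty and `Z` is a
dominion for Player 1 in `𝔊`. -/
theorem stmt17 (V : Type) [Fintype V] (G : GameGraph V)
    (h : ℕ) (hh : Even h) (P : V → ℕ) (hP : ∀ v, P v ≤ h)
    (Λ : Set (PersGroup V)) (hΛ : ∀ g ∈ Λ, persWF G g)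
    (S : Set V) (hSne : S.Nonempty)
    (hS : Dominion G 1 {ρ | psiPers Λ ρ ∧ ¬ ParityWin P ρ} S) :
    ({v : V | ∃ σ : Strategy V, StratValid G 1 σ ∧
        ∀ ρ : ℕ → V, IsPlay G ρ → Compliant G 1 σ ρ → ρ 0 = v →
          psiPers Λ ρ ∧ ¬ ParityWin P ρ ∧
            ∀ n, ρ n ∈ S \ {u : V | P u = h}}).Nonempty ∧
      Dominion G 1 {ρ | psiPers Λ ρ ∧ ¬ ParityWin P ρ}
        {v : V | ∃ σ : Strategy V, StratValid G 1 σ ∧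
          ∀ ρ : ℕ → V, IsPlay G ρ → Compliant G 1 σ ρ → ρ 0 = v →
            psiPers Λ ρ ∧ ¬ ParityWin P ρ ∧
              ∀ n, ρ n ∈ S \ {u : V | P u = h}} := by
  classical
  set Z : Set V := {v : V | ∃ σ : Strategy V, StratValid G 1 σ ∧
      ∀ ρ : ℕ → V, IsPlay G ρ → Compliant G 1 σ ρ → ρ 0 = v →
        psiPers Λ ρ ∧ ¬ ParityWin P ρ ∧
          ∀ n, ρ n ∈ S \ {u : V | P u = h}} with hZdef
  obtain ⟨σ, hσv, hσw⟩ := hS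
  obtain ⟨s, hsS⟩ := hSne
  -- A general "tail membership in Z" principle.
  have hZtail : ∀ σ0 : Strategy V, StratValid G 1 σ0 →
      ∀ ρ : ℕ → V, IsPlay G ρ → Compliant G 1 σ0 ρ →
      ∀ n : ℕ,
      (∀ τ : ℕ → V, IsPlay G τ → Compliant G 1 σ0 τ → (∀ j ≤ n, τ j = ρ j) →
        psiPers Λ τ ∧ ¬ ParityWin P τ ∧ ∀ m, n ≤ m → τ m ∈ S \ {u : V | P u = h}) →
      ρ n ∈ Z := by
    intro σ0 hσ0v ρ hρp hρc n hyp
    refine ⟨shiftStrat σ0 (List.ofFn fun j : Fin n => ρ j.val), shiftStrat_valid hσ0v _, ?_⟩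
    intro τ' hτ'p hτ'c hτ'0
    have hμp : IsPlay G (splice ρ τ' n) := splice_isPlay hρp hτ'p hτ'0
    have hμc : Compliant G 1 σ0 (splice ρ τ' n) := splice_compliant hρc hτ'c hτ'0
    have hμagree : ∀ j ≤ n, splice ρ τ' n j = ρ j := fun j hj => splice_agree hτ'0 hj
    obtain ⟨hpsi, hpar, hstay⟩ := hyp (splice ρ τ' n) hμp hμc hμagree
    have heq : (fun k => splice ρ τ' n (n + k)) = τ' := funext fun k => splice_add k
    refine ⟨?_, ?_, ?_⟩
    · have := psiPers_tail (n := n) hpsi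
      rwa [heq] at this
    · intro hp
      apply hpar
      apply parityWin_of_tail (n := n)
      rwa [heq]
    · intro m
      have := hstay (n + m) (by omega)
      rwa [splice_add m] at this
  constructor
  · -- Nonemptiness of Z
    obtain ⟨ρs, ns, h1, h2, h3, h4⟩ := exists_good_position G h hh P hP σ s hσv
      (fun ρ hp hc h0 => (hσw ρ hp hc (by rw [h0]; exact hsS)).2.2)
    refine ⟨ρs ns, hZtail σ hσv ρs h1 h2 ns ?_⟩
    intro τ hτp hτc hagree
    have hτ0 : τ 0 ∈ S := by rw [hagree 0 (Nat.zero_le ns), h3]; exact hsS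
    obtain ⟨hstayS, hW⟩ := hσw τ hτp hτc hτ0
    exact ⟨hW.1, hW.2, fun m hm => ⟨hstayS m, h4 τ hτp hτc hagree m hm⟩⟩
  · -- Z is a dominion
    have hsig : ∀ v : V, ∃ σ' : Strategy V, StratValid G 1 σ' ∧
        (v ∈ Z → ∀ ρ : ℕ → V, IsPlay G ρ → Compliant G 1 σ' ρ → ρ 0 = v →
          psiPers Λ ρ ∧ ¬ ParityWin P ρ ∧ ∀ n, ρ n ∈ S \ {u : V | P u = h}) := by
      intro v
      by_cases hv : v ∈ Z
      · obtain ⟨σ', hs1, hs2⟩ := hv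
        exact ⟨σ', hs1, fun _ => hs2⟩
      · exact ⟨fun _ u => Classical.choose (G.exists_succ u),
          fun _ u _ => Classical.choose_spec (G.exists_succ u), fun hc => absurd hc hv⟩
    choose sig hsig1 hsig2 using hsig
    have hhead : ∀ (ρ : ℕ → V) (k : ℕ),
        (List.ofFn fun j : Fin k => ρ j.val).headD (ρ k) = ρ 0 := by
      intro ρ k
      cases k with
      | zero => rfl
      | succ k => rw [List.ofFn_succ]; rfl
    refine ⟨fun hst u => sig (hst.headD u) hst u, fun hst u hu => hsig1 _ hst u hu, ?_⟩
    intro ρ hρp hρc h0Z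
    have hρc' : Compliant G 1 (sig (ρ 0)) ρ := by
      intro k hk
      exact (hρc k hk).trans
        (congrArg (fun v => sig v (List.ofFn fun j : Fin k => ρ j.val) (ρ k)) (hhead ρ k))
    have hprops := hsig2 (ρ 0) h0Z ρ hρp hρc' rfl
    constructor
    · intro n
      apply hZtail (sig (ρ 0)) (hsig1 (ρ 0)) ρ hρp hρc' n
      intro τ hτp hτc hagree
      have hτ0 : τ 0 = ρ 0 := hagree 0 (Nat.zero_le n)
      obtain ⟨hq1, hq2, hq3⟩ := hsig2 (ρ 0) h0Z τ hτp hτc hτ0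
      exact ⟨hq1, hq2, fun m _ => hq3 m⟩
    · exact ⟨hprops.1, hprops.2.1⟩
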